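/- arXiv:2108.12989 — 3 statements merged into one kernel-verified Lean document; each statement's English description precedes it below -/
import Mathlib

section
/- Let b_j = (j+1)^{1-α} - j^{1-α} for α ∈ (0,1), extended by b_{-k} := b_k. For any N ≥ 1 and any vectors w_0, …, w_{N-1} in a real inner product space H, the double sum Σ_{k=0}^{N-1} Σ_{j=0}^{N-1} b_{|k-j|} ⟨w_j, w_k⟩ is nonnegative. -/
/-!
A nonnegative, nonincreasing, convex sequence `b` is, on `{0, …, N}`, a nonnegative combination
of the constant `1` and the tents `n ↦ (m + 1 - n)₊` (discrete Taylor expansion with the second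
differences as weights, after freezing `b` beyond `N`). The tent kernel `(m + 1 - |k - j|)₊`
counts the common points of the windows `[j, j + m]` and `[k, k + m]`, so its quadratic form is
a sum of squared norms; hence the Toeplitz form of `b` is nonnegative (Pólya's criterion).
For `b j = (j + 1)^β - j^β` with `β = 1 - α ∈ (0, 1)` these three properties follow from the
monotonicity and concavity of `x^β` and the convexity of its derivative `β x^(β - 1)`.
-/

open Finset
open scoped RealInnerProductSpace

section Gram

variable {ι τ H : Type*} [NormedAddCommGroup H] [InnerProductSpace ℝ H]

theorem sum_sum_sum_mul_mul_inner_nonneg (s : Finset ι) (T : Finset τ) (f : τ → ι → ℝ)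
    (w : ι → H) : 0 ≤ ∑ k ∈ s, ∑ j ∈ s, (∑ t ∈ T, f t j * f t k) * ⟪w j, w k⟫ := by
  have hgram : ∑ k ∈ s, ∑ j ∈ s, (∑ t ∈ T, f t j * f t k) * ⟪w j, w k⟫ =
      ∑ t ∈ T, ⟪∑ j ∈ s, f t j • w j, ∑ k ∈ s, f t k • w k⟫ := by
    simp only [sum_inner, inner_sum, real_inner_smul_left, real_inner_smul_right, sum_mul]
    calc _ = ∑ k ∈ s, ∑ t ∈ T, ∑ j ∈ s, f t j * f t k * ⟪w j, w k⟫ :=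
          sum_congr rfl fun k _ => sum_comm
      _ = _ := sum_comm.trans <| sum_congr rfl fun t _ => sum_congr rfl fun k _ =>
          sum_congr rfl fun j _ => by ring
  rw [hgram]
  exact sum_nonneg fun t _ => real_inner_self_nonneg

end Gram

section Toeplitz

variable {H : Type*} [NormedAddCommGroup H] [InnerProductSpace ℝ H]

def toeplitzForm (N : ℕ) (w : ℕ → H) : (ℕ → ℝ) →ₗ[ℝ] ℝ where
  toFun b := ∑ k ∈ range N, ∑ j ∈ range N, b ((k : ℤ) - (j : ℤ)).natAbs * ⟪w j, w k⟫
  map_add' a b := by simp only [Pi.add_apply, add_mul, sum_add_distrib]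
  map_smul' c b := by simp only [Pi.smul_apply, smul_eq_mul, mul_assoc, mul_sum, RingHom.id_apply]

theorem toeplitzForm_apply (N : ℕ) (w : ℕ → H) (b : ℕ → ℝ) :
    toeplitzForm N w b =
      ∑ k ∈ range N, ∑ j ∈ range N, b ((k : ℤ) - (j : ℤ)).natAbs * ⟪w j, w k⟫ :=
  rfl

theorem toeplitzForm_congr {N : ℕ} {a b : ℕ → ℝ} (h : ∀ n < N, a n = b n) (w : ℕ → H) :
    toeplitzForm N w a = toeplitzForm N w b := by
  simp only [toeplitzForm_apply]
  refine sum_congr rfl fun k hk => sum_congr rfl fun j hj => ?_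
  simp only [mem_range] at hk hj
  rw [h _ (by omega)]

theorem toeplitzForm_one_nonneg (N : ℕ) (w : ℕ → H) : 0 ≤ toeplitzForm N w 1 := by
  simpa only [toeplitzForm_apply, Pi.one_apply, one_mul, range_one, mul_one, sum_const,
    card_singleton, one_smul] using
    sum_sum_sum_mul_mul_inner_nonneg (range N) (range 1) (fun _ _ => 1) w

theorem natCast_tsub_natAbs_eq_sum_ite_mul_ite {N m j k : ℕ} (hj : j < N) :
    ((m + 1 - ((k : ℤ) - (j : ℤ)).natAbs : ℕ) : ℝ) =
      ∑ t ∈ range (N + m), (if t ∈ Icc j (j + m) then (1 : ℝ) else 0) *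
        (if t ∈ Icc k (k + m) then 1 else 0) := by
  simp_rw [ite_zero_mul_ite_zero, one_mul, ← mem_inter, sum_ite_mem, sum_const, nsmul_one]
  have : range (N + m) ∩ (Icc j (j + m) ∩ Icc k (k + m)) = Icc (max j k) (min j k + m) := by
    ext t
    simp only [mem_inter, mem_range, mem_Icc]
    omega
  rw [this, Nat.card_Icc]
  congr 1
  omega

theorem toeplitzForm_tent_nonneg (N m : ℕ) (w : ℕ → H) :
    0 ≤ toeplitzForm N w fun n => ((m + 1 - n : ℕ) : ℝ) := by
  have htent : toeplitzForm N w (fun n => ((m + 1 - n : ℕ) : ℝ)) =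
      ∑ k ∈ range N, ∑ j ∈ range N, (∑ t ∈ range (N + m),
        (if t ∈ Icc j (j + m) then 1 else 0) * (if t ∈ Icc k (k + m) then 1 else 0) : ℝ) *
          ⟪w j, w k⟫ := by
    rw [toeplitzForm_apply]
    refine sum_congr rfl fun k _ => sum_congr rfl fun j hj => ?_
    rw [natCast_tsub_natAbs_eq_sum_ite_mul_ite (mem_range.1 hj)]
  rw [htent]
  exact sum_sum_sum_mul_mul_inner_nonneg _ _ _ w

theorem sum_range_secondDiff_mul_tsub (u : ℕ → ℝ) {n M : ℕ} (hnM : n ≤ M) :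
    ∑ m ∈ range M, (u m - 2 * u (m + 1) + u (m + 2)) * ((m + 1 - n : ℕ) : ℝ) =
      u n - u M - ((M - n : ℕ) : ℝ) * (u M - u (M + 1)) := by
  induction M, hnM using Nat.le_induction with
  | base =>
    rw [sum_eq_zero fun m hm => by rw [Nat.sub_eq_zero_of_le (mem_range.1 hm), Nat.cast_zero,
      mul_zero]]
    simp only [sub_self, tsub_self, Nat.cast_zero, zero_mul]
  | succ M hnM ih =>
    rw [sum_range_succ, ih, Nat.sub_add_comm hnM]
    push_cast
    ring

theorem eq_sum_range_secondDiff_mul_tsub_add {u : ℕ → ℝ} {M : ℕ}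
    (hu : ∀ n, M ≤ n → u n = u M) (n : ℕ) :
    u n = ∑ m ∈ range M, (u m - 2 * u (m + 1) + u (m + 2)) * ((m + 1 - n : ℕ) : ℝ) + u M := by
  rcases le_or_gt n M with hnM | hMn
  · rw [sum_range_secondDiff_mul_tsub u hnM, hu (M + 1) M.le_succ]
    ring
  · rw [sum_eq_zero fun m hm => ?_, zero_add, hu n hMn.le]
    rw [Nat.sub_eq_zero_of_le (by have := mem_range.1 hm; omega), Nat.cast_zero, mul_zero]

theorem secondDiff_min_nonneg {b : ℕ → ℝ} (hb : Antitone b)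
    (hb' : Antitone fun n => b n - b (n + 1)) (M m : ℕ) :
    0 ≤ b (min m M) - 2 * b (min (m + 1) M) + b (min (m + 2) M) := by
  rcases le_or_gt (m + 2) M with h | h
  · rw [min_eq_left (by omega), min_eq_left (by omega), min_eq_left h]
    linarith [hb' m.le_succ]
  rcases le_or_gt (m + 1) M with h' | h'
  · obtain rfl : M = m + 1 := by omega
    rw [min_eq_left (by omega), min_self, min_eq_right h.le]
    linarith [hb m.le_succ]
  · rw [min_eq_right (by omega), min_eq_right h'.le, min_eq_right h.le]
    linarith

theorem toeplitzForm_nonneg_of_antitone {b : ℕ → ℝ} (hb₀ : ∀ n, 0 ≤ b n) (hb : Antitone b)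
    (hb' : Antitone fun n => b n - b (n + 1)) (N : ℕ) (w : ℕ → H) :
    0 ≤ toeplitzForm N w b := by
  set u : ℕ → ℝ := fun n => b (min n N)
  set c : ℕ → ℝ := fun m => u m - 2 * u (m + 1) + u (m + 2)
  have hu : u = ∑ m ∈ range N, c m • (fun n => ((m + 1 - n : ℕ) : ℝ)) + u N • 1 := by
    funext n
    simp only [Pi.add_apply, Finset.sum_apply, Pi.smul_apply, smul_eq_mul, Pi.one_apply, mul_one]
    exact eq_sum_range_secondDiff_mul_tsub_add (u := u) (fun n hn => by
      simp only [u, min_eq_right hn, min_self]) n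
  calc 0 ≤ ∑ m ∈ range N, c m * toeplitzForm N w (fun n => ((m + 1 - n : ℕ) : ℝ)) +
        u N * toeplitzForm N w 1 :=
        add_nonneg (sum_nonneg fun m _ => mul_nonneg (secondDiff_min_nonneg hb hb' N m)
          (toeplitzForm_tent_nonneg N m w)) (mul_nonneg (hb₀ _) (toeplitzForm_one_nonneg N w))
    _ = toeplitzForm N w u := by
      conv_rhs => rw [hu]
      simp only [map_add, map_sum, map_smul, smul_eq_mul]
    _ = toeplitzForm N w b := toeplitzForm_congr (fun n hn => by simp only [u, min_eq_left hn.le]) w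

end Toeplitz

open Set

theorem ConvexOn.two_mul_apply_add_one_le {s : Set ℝ} {f : ℝ → ℝ} (hf : ConvexOn ℝ s f) {x : ℝ}
    (hx : x ∈ s) (hx₂ : x + 2 ∈ s) : 2 * f (x + 1) ≤ f x + f (x + 2) := by
  have h := hf.2 hx hx₂ (by norm_num : (0 : ℝ) ≤ 1 / 2) (by norm_num : (0 : ℝ) ≤ 1 / 2)
    (by norm_num)
  simp only [smul_eq_mul, show 1 / 2 * x + 1 / 2 * (x + 2) = x + 1 by ring] at h
  linarith

theorem Real.convexOn_rpow_of_nonpos {p : ℝ} (hp : p ≤ 0) :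
    ConvexOn ℝ (Ioi 0) fun x : ℝ => x ^ p := by
  have hlog : ConvexOn ℝ (Ioi 0) fun x => p * Real.log x := by
    simpa using strictConcaveOn_log_Ioi.concaveOn.neg.smul (neg_nonneg.2 hp)
  have himage : Convex ℝ ((fun x => p * Real.log x) '' Ioi 0) :=
    (isPreconnected_Ioi.image _ <| continuousOn_const.mul <|
      Real.continuousOn_log.mono fun x hx => ne_of_gt hx).convex
  refine ((convexOn_exp.subset (subset_univ _) himage).comp hlog
    (exp_monotone.monotoneOn _)).congr fun x hx => ?_
  simp [Real.rpow_def_of_pos hx, mul_comm]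

theorem monotoneOn_secondDiff_of_convexOn_deriv {f f' : ℝ → ℝ} (hf : Continuous f)
    (hderiv : ∀ x > 0, HasDerivAt f (f' x) x) (hf' : ConvexOn ℝ (Ioi 0) f') :
    MonotoneOn (fun x => f x - 2 * f (x + 1) + f (x + 2)) (Ici 0) := by
  have hderiv₂ : ∀ x > 0, HasDerivAt (fun x => f x - 2 * f (x + 1) + f (x + 2))
      (f' x - 2 * f' (x + 1) + f' (x + 2)) x := fun x hx =>
    ((hderiv x hx).sub (((hderiv (x + 1) (by linarith)).comp_add_const x 1).const_mul 2)).add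
      ((hderiv (x + 2) (by linarith)).comp_add_const x 2)
  refine monotoneOn_of_deriv_nonneg (convex_Ici 0) (by fun_prop) (fun x hx => ?_) fun x hx => ?_
  · rw [interior_Ici] at hx
    exact (hderiv₂ x hx).differentiableAt.differentiableWithinAt
  · rw [interior_Ici] at hx
    rw [(hderiv₂ x hx).deriv]
    linarith [hf'.two_mul_apply_add_one_le hx (mem_Ioi.2 (by linarith [mem_Ioi.1 hx]))]

noncomputable def l1Coeff (β : ℝ) (n : ℕ) : ℝ := ((n : ℝ) + 1) ^ β - (n : ℝ) ^ β

section L1Coeff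

variable {β : ℝ}

theorem l1Coeff_nonneg (hβ : 0 ≤ β) (n : ℕ) : 0 ≤ l1Coeff β n :=
  sub_nonneg.2 (Real.rpow_le_rpow n.cast_nonneg (by linarith) hβ)

theorem antitone_l1Coeff (hβ₀ : 0 ≤ β) (hβ₁ : β ≤ 1) : Antitone (l1Coeff β) := by
  refine antitone_nat_of_succ_le fun n => ?_
  have h := (Real.concaveOn_rpow hβ₀ hβ₁).neg.two_mul_apply_add_one_le (x := n)
    (mem_Ici.2 n.cast_nonneg) (mem_Ici.2 (by positivity))
  simp only [Pi.neg_apply] at h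
  simp only [l1Coeff, Nat.cast_succ, add_assoc, one_add_one_eq_two]
  linarith

theorem antitone_l1Coeff_sub_l1Coeff_succ (hβ₀ : 0 < β) (hβ₁ : β ≤ 1) :
    Antitone fun n => l1Coeff β n - l1Coeff β (n + 1) := by
  refine antitone_nat_of_succ_le fun n => ?_
  have h := monotoneOn_secondDiff_of_convexOn_deriv (Real.continuous_rpow_const hβ₀.le)
    (fun x hx => Real.hasDerivAt_rpow_const (Or.inl hx.ne'))
    ((Real.convexOn_rpow_of_nonpos (by linarith : β - 1 ≤ 0)).smul hβ₀.le)
    (mem_Ici.2 n.cast_nonneg) (mem_Ici.2 (by positivity)) (by linarith : (n : ℝ) ≤ n + 1)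
  simp only [l1Coeff, Nat.cast_succ] at h ⊢
  ring_nf at h ⊢
  linarith

end L1Coeff

theorem stmt6_general {H : Type*} [NormedAddCommGroup H] [InnerProductSpace ℝ H]
    (α : ℝ) (hα0 : 0 < α) (hα1 : α < 1)
    (b : ℕ → ℝ) (hb : ∀ j : ℕ, b j = ((j : ℝ) + 1) ^ (1 - α) - (j : ℝ) ^ (1 - α))
    (N : ℕ) (w : ℕ → H) :
    0 ≤ ∑ k ∈ Finset.range N, ∑ j ∈ Finset.range N,
        b ((k : ℤ) - (j : ℤ)).natAbs * ⟪w j, w k⟫ := by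
  obtain rfl : b = l1Coeff (1 - α) := funext hb
  exact toeplitzForm_nonneg_of_antitone (l1Coeff_nonneg (by linarith))
    (antitone_l1Coeff (by linarith) (by linarith))
    (antitone_l1Coeff_sub_l1Coeff_succ (by linarith) (by linarith)) N w

/-- Positivity of the symmetric L1 coefficient kernel:
`Σ_{k,j=0}^{N-1} b_{|k-j|} ⟨w_j, w_k⟩ ≥ 0`. -/
theorem stmt6 {H : Type*} [NormedAddCommGroup H] [InnerProductSpace ℝ H]
    (α : ℝ) (hα0 : 0 < α) (hα1 : α < 1)
    (b : ℕ → ℝ) (hb : ∀ j : ℕ, b j = ((j : ℝ) + 1) ^ (1 - α) - (j : ℝ) ^ (1 - α))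
    (N : ℕ) (hN : 1 ≤ N) (w : ℕ → H) :
    0 ≤ ∑ k ∈ Finset.range N, ∑ j ∈ Finset.range N,
        b ((k : ℤ) - (j : ℤ)).natAbs * ⟪w j, w k⟫ :=
  stmt6_general α hα0 hα1 b hb N w
end

section
/- Let b_j = (j+1)^{1-α} - j^{1-α} for α ∈ (0,1), with b_0 = 1. For any N ≥ 1 and vectors w_0, …, w_{N-1} in a real inner product space H, one has Σ_{k=0}^{N-1} Σ_{j=0}^{k} b_{k-j} ⟨w_j, w_k⟩ ≥ (1/2) Σ_{k=0}^{N-1} ‖w_k‖². -/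
open scoped RealInnerProductSpace

open Finset

private lemma coeff_decomp (b : ℕ → ℝ) (d : ℕ) :
    ∀ n, d ≤ n → b d = b n + (b n - b (n+1)) * ((n - d : ℕ) : ℝ)
      + ∑ l ∈ Finset.range n, (b l - 2 * b (l+1) + b (l+2)) * (((l+1) - d : ℕ) : ℝ) := by
  intro n hn
  induction n, hn using Nat.le_induction with
  | base =>
      have h2 : ∑ l ∈ Finset.range d, (b l - 2 * b (l+1) + b (l+2)) * (((l+1) - d : ℕ) : ℝ)
          = 0 := by
        apply Finset.sum_eq_zero
        intro l hl
        have hld := Finset.mem_range.mp hl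
        have : (l + 1 - d : ℕ) = 0 := by omega
        rw [this]; simp
      rw [h2, Nat.sub_self]; simp
  | succ n hdn ih =>
      rw [Finset.sum_range_succ]
      have hsum : ∑ l ∈ Finset.range n, (b l - 2 * b (l+1) + b (l+2)) * (((l+1) - d : ℕ) : ℝ)
          = b d - b n - (b n - b (n+1)) * ((n - d : ℕ) : ℝ) := by linarith [ih]
      rw [hsum]
      have c1 : ((n + 1 - d : ℕ) : ℝ) = ((n - d : ℕ) : ℝ) + 1 := by
        push_cast [Nat.cast_sub hdn, Nat.cast_sub (by omega : d ≤ n + 1)]; ring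
      rw [c1]
      have e : n + 1 + 1 = n + 2 := rfl
      rw [e]
      ring

private lemma fejer_nonneg {H : Type*} [NormedAddCommGroup H] [InnerProductSpace ℝ H]
    (m N : ℕ) (w : ℕ → H) :
    0 ≤ ∑ j ∈ Finset.range N, ∑ k ∈ Finset.range N,
        ((m - (j - k) - (k - j) : ℕ) : ℝ) * ⟪w j, w k⟫ := by
  classical
  set χ : ℕ → ℕ → ℝ := fun j p => if j ≤ p ∧ p < j + m then 1 else 0 with hχ
  have key : ∀ j ∈ Finset.range N, ∀ k ∈ Finset.range N,
      ((m - (j - k) - (k - j) : ℕ) : ℝ) = ∑ p ∈ Finset.range (N + m), χ j p * χ k p := by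
    intro j hj k hk
    have hj' := Finset.mem_range.mp hj
    have hk' := Finset.mem_range.mp hk
    have h1 : ∀ p, χ j p * χ k p
        = if (j ≤ p ∧ p < j + m) ∧ (k ≤ p ∧ p < k + m) then (1:ℝ) else 0 := by
      intro p
      simp only [hχ]
      split_ifs with h1 h2 h3 <;> simp_all
    rw [Finset.sum_congr rfl (fun p _ => h1 p), Finset.sum_boole]
    have h2 : ((Finset.range (N + m)).filter
          (fun p => (j ≤ p ∧ p < j + m) ∧ (k ≤ p ∧ p < k + m)))
        = Finset.Ico (max j k) (min j k + m) := by
      ext p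
      simp only [Finset.mem_filter, Finset.mem_range, Finset.mem_Ico]
      omega
    rw [h2, Nat.card_Ico]
    congr 1
    omega
  have rhs : ∀ p, ⟪∑ j ∈ range N, χ j p • w j, ∑ k ∈ range N, χ k p • w k⟫
      = ∑ j ∈ range N, ∑ k ∈ range N, χ j p * χ k p * ⟪w j, w k⟫ := by
    intro p
    rw [sum_inner]
    refine Finset.sum_congr rfl fun j _ => ?_
    rw [inner_sum]
    refine Finset.sum_congr rfl fun k _ => ?_
    rw [real_inner_smul_left, real_inner_smul_right]; ring
  have main : ∑ j ∈ Finset.range N, ∑ k ∈ Finset.range N,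
        ((m - (j - k) - (k - j) : ℕ) : ℝ) * ⟪w j, w k⟫
      = ∑ p ∈ range (N + m), ⟪∑ j ∈ range N, χ j p • w j, ∑ k ∈ range N, χ k p • w k⟫ := by
    calc ∑ j ∈ Finset.range N, ∑ k ∈ Finset.range N,
          ((m - (j - k) - (k - j) : ℕ) : ℝ) * ⟪w j, w k⟫
        = ∑ j ∈ range N, ∑ k ∈ range N, ∑ p ∈ range (N + m),
            χ j p * χ k p * ⟪w j, w k⟫ := by
          refine Finset.sum_congr rfl fun j hj => Finset.sum_congr rfl fun k hk => ?_
          rw [key j hj k hk, Finset.sum_mul]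
      _ = ∑ p ∈ range (N + m), ∑ j ∈ range N, ∑ k ∈ range N,
            χ j p * χ k p * ⟪w j, w k⟫ := by
          rw [Finset.sum_congr rfl fun j (_ : j ∈ range N) =>
            (Finset.sum_comm (s := range N) (t := range (N + m))
              (f := fun k p => χ j p * χ k p * ⟪w j, w k⟫))]
          exact Finset.sum_comm (s := range N) (t := range (N + m))
            (f := fun j p => ∑ k ∈ range N, χ j p * χ k p * ⟪w j, w k⟫)
      _ = ∑ p ∈ range (N + m), ⟪∑ j ∈ range N, χ j p • w j, ∑ k ∈ range N, χ k p • w k⟫ := by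
          exact Finset.sum_congr rfl fun p _ => (rhs p).symm
  rw [main]
  exact Finset.sum_nonneg fun p _ => real_inner_self_nonneg

private lemma rpow_midpoint_concave {α : ℝ} (hα0 : 0 < α) (hα1 : α < 1) (x : ℝ) (hx : 0 ≤ x) :
    x ^ (1-α) + (x+2) ^ (1-α) ≤ 2 * (x+1) ^ (1-α) := by
  have hcon := Real.concaveOn_rpow (by linarith : (0:ℝ) ≤ 1 - α) (by linarith : (1:ℝ) - α ≤ 1)
  have h := hcon.2 (Set.mem_Ici.mpr hx) (Set.mem_Ici.mpr (by linarith : (0:ℝ) ≤ x + 2))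
    (by norm_num : (0:ℝ) ≤ 1/2) (by norm_num : (0:ℝ) ≤ 1/2) (by norm_num)
  simp only [smul_eq_mul] at h
  rw [show (1/2:ℝ) * x + (1/2) * (x+2) = x + 1 by ring] at h
  linarith

private lemma rpow_neg_midpoint_convex {α : ℝ} (hα0 : 0 < α) (t : ℝ) (ht : 0 < t) :
    2 * (t+1) ^ (-α) ≤ t ^ (-α) + (t+2) ^ (-α) := by
  have ha : 0 < t ^ (-α) := Real.rpow_pos_of_pos ht _
  have hc : 0 < (t+2) ^ (-α) := Real.rpow_pos_of_pos (by linarith) _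
  have h1 : 2 * Real.sqrt (t ^ (-α) * (t+2) ^ (-α)) ≤ t ^ (-α) + (t+2) ^ (-α) := by
    nlinarith [sq_nonneg (Real.sqrt (t ^ (-α)) - Real.sqrt ((t+2) ^ (-α))),
      Real.sq_sqrt ha.le, Real.sq_sqrt hc.le,
      Real.sqrt_mul ha.le ((t+2) ^ (-α)),
      Real.sqrt_nonneg (t ^ (-α) * (t+2) ^ (-α))]
  have h2 : (t+1) ^ (-α) ≤ Real.sqrt (t ^ (-α) * (t+2) ^ (-α)) := by
    rw [← Real.mul_rpow ht.le (by linarith : (0:ℝ) ≤ t + 2)]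
    have h3 : ((t+1)^2) ^ (-α) ≤ (t * (t+2)) ^ (-α) :=
      Real.rpow_le_rpow_of_nonpos (by nlinarith) (by nlinarith) (by linarith)
    have h5 : ((t+1)^2 : ℝ) ^ (-α) = ((t+1) ^ (-α))^2 := by
      rw [← Real.rpow_natCast ((t+1) ^ (-α)) 2, ← Real.rpow_natCast (t+1) 2,
        ← Real.rpow_mul (by linarith : (0:ℝ) ≤ t + 1),
        ← Real.rpow_mul (by linarith : (0:ℝ) ≤ t + 1)]
      norm_num [mul_comm]
    have h6 : (t+1) ^ (-α) = Real.sqrt (((t+1)^2) ^ (-α)) := by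
      rw [h5, Real.sqrt_sq (Real.rpow_pos_of_pos (by linarith) _).le]
    rw [h6]
    exact Real.sqrt_le_sqrt h3
  linarith

private lemma third_diff_nonneg {α : ℝ} (hα0 : 0 < α) (hα1 : α < 1) (x : ℝ) (hx : 0 ≤ x) :
    0 ≤ (x+3) ^ (1-α) - 3 * (x+2) ^ (1-α) + 3 * (x+1) ^ (1-α) - x ^ (1-α) := by
  set γ := 1 - α with hγdef
  have hγ0 : 0 < γ := by simp only [hγdef]; linarith
  set g : ℝ → ℝ := fun t => (t+2) ^ γ - 2 * (t+1) ^ γ + t ^ γ with hg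
  have hgmono : MonotoneOn g (Set.Ici (0:ℝ)) := by
    have hcont : Continuous fun t : ℝ => t ^ γ := Real.continuous_rpow_const hγ0.le
    apply monotoneOn_of_hasDerivWithinAt_nonneg (convex_Ici 0)
      (f' := fun t => 1 * γ * (t+2) ^ (γ-1) - 2 * (1 * γ * (t+1) ^ (γ-1)) + 1 * γ * t ^ (γ-1))
    · exact (((hcont.comp (continuous_id.add continuous_const)).sub
        (continuous_const.mul (hcont.comp (continuous_id.add continuous_const)))).add
        hcont).continuousOn
    · intro t ht
      rw [interior_Ici] at ht
      have ht' : (0:ℝ) < t := ht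
      have h2 : HasDerivAt (fun t : ℝ => (t+2) ^ γ) (1 * γ * (t+2) ^ (γ-1)) t :=
        ((hasDerivAt_id t).add_const 2).rpow_const (Or.inl (by simp only [id_eq]; linarith))
      have h1 : HasDerivAt (fun t : ℝ => (t+1) ^ γ) (1 * γ * (t+1) ^ (γ-1)) t :=
        ((hasDerivAt_id t).add_const 1).rpow_const (Or.inl (by simp only [id_eq]; linarith))
      have h0 : HasDerivAt (fun t : ℝ => t ^ γ) (1 * γ * t ^ (γ-1)) t :=
        (hasDerivAt_id t).rpow_const (Or.inl (by simp only [id_eq]; linarith))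
      exact ((h2.sub (h1.const_mul 2)).add h0).hasDerivWithinAt
    · intro t ht
      rw [interior_Ici] at ht
      have ht' : (0:ℝ) < t := ht
      have hkey := rpow_neg_midpoint_convex hα0 t ht'
      have he : γ - 1 = -α := by simp only [hγdef]; ring
      rw [he]
      nlinarith [hγ0]
  have h := hgmono (Set.mem_Ici.mpr hx) (Set.mem_Ici.mpr (by linarith : (0:ℝ) ≤ x + 1))
    (by linarith : x ≤ x + 1)
  simp only [hg] at h
  rw [show x + 1 + 2 = x + 3 by ring, show x + 1 + 1 = x + 2 by ring] at h
  linarith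

/-- Coercivity of the lower-triangular L1 coefficient sum:
`Σ_{k=0}^{N-1} Σ_{j=0}^{k} b_{k-j} ⟨w_j, w_k⟩ ≥ (1/2) Σ_k ‖w_k‖²`. -/
theorem stmt7 {H : Type*} [NormedAddCommGroup H] [InnerProductSpace ℝ H]
    (α : ℝ) (hα0 : 0 < α) (hα1 : α < 1)
    (b : ℕ → ℝ) (hb : ∀ j : ℕ, b j = ((j : ℝ) + 1) ^ (1 - α) - (j : ℝ) ^ (1 - α))
    (N : ℕ) (hN : 1 ≤ N) (w : ℕ → H) :
    (1 / 2) * ∑ k ∈ Finset.range N, ‖w k‖ ^ 2 ≤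
      ∑ k ∈ Finset.range N, ∑ j ∈ Finset.range (k + 1), b (k - j) * ⟪w j, w k⟫ := by
  classical
  obtain ⟨n, rfl⟩ : ∃ n, N = n + 1 := ⟨N - 1, by omega⟩
  -- restated coefficient formulas
  have hbj : ∀ j : ℕ, b j = ((j:ℝ)+1) ^ (1-α) - (j:ℝ) ^ (1-α) := hb
  have hbj1 : ∀ j : ℕ, b (j+1) = ((j:ℝ)+2) ^ (1-α) - ((j:ℝ)+1) ^ (1-α) := by
    intro j
    rw [hb]
    push_cast
    rw [show (j:ℝ)+1+1 = (j:ℝ)+2 by ring]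
  have hbj2 : ∀ j : ℕ, b (j+2) = ((j:ℝ)+3) ^ (1-α) - ((j:ℝ)+2) ^ (1-α) := by
    intro j
    rw [hb]
    push_cast
    rw [show (j:ℝ)+2+1 = (j:ℝ)+3 by ring]
  have hb0 : b 0 = 1 := by
    rw [hb]
    norm_num [Real.zero_rpow (show (1:ℝ) - α ≠ 0 by intro h; linarith)]
  have hbnn : ∀ j, 0 ≤ b j := by
    intro j
    rw [hbj]
    have := Real.rpow_le_rpow (Nat.cast_nonneg j)
      (by linarith : (j:ℝ) ≤ (j:ℝ)+1) (by linarith : (0:ℝ) ≤ 1 - α)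
    linarith
  have hbmono : ∀ j : ℕ, b (j+1) ≤ b j := by
    intro j
    rw [hbj1 j, hbj j]
    have := rpow_midpoint_concave hα0 hα1 (j:ℝ) (Nat.cast_nonneg j)
    linarith
  have hbconv : ∀ l : ℕ, 0 ≤ b l - 2 * b (l+1) + b (l+2) := by
    intro l
    rw [hbj2 l, hbj1 l, hbj l]
    have := third_diff_nonneg hα0 hα1 (l:ℝ) (Nat.cast_nonneg l)
    linarith
  -- abbreviations
  set D : ℝ := ∑ k ∈ Finset.range (n+1), ‖w k‖ ^ 2 with hD
  set S : ℝ := ∑ k ∈ Finset.range (n+1), ∑ j ∈ Finset.range (k + 1), b (k - j) * ⟪w j, w k⟫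
    with hS
  set Q : ℝ := ∑ k ∈ Finset.range (n+1), ∑ j ∈ Finset.range (n+1),
      b ((j-k)+(k-j)) * ⟪w j, w k⟫ with hQ
  set T : ℕ → ℝ := fun m => ∑ k ∈ Finset.range (n+1), ∑ j ∈ Finset.range (n+1),
      ((m - (j-k) - (k-j) : ℕ) : ℝ) * ⟪w j, w k⟫ with hT
  set S0 : ℝ := ∑ k ∈ Finset.range (n+1), ∑ j ∈ Finset.range (n+1), ⟪w j, w k⟫ with hS0
  -- Part A : Q = 2 S - D
  have hQsplit : Q = S + ∑ k ∈ Finset.range (n+1), ∑ j ∈ Finset.Ico (k+1) (n+1),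
      b (j-k) * ⟪w j, w k⟫ := by
    rw [hQ, hS, ← Finset.sum_add_distrib]
    refine Finset.sum_congr rfl fun k hk => ?_
    have hk' : k + 1 ≤ n + 1 := by have := Finset.mem_range.mp hk; omega
    rw [Finset.range_eq_Ico, ← Finset.sum_Ico_consecutive _ (Nat.zero_le (k+1)) hk',
      ← Finset.range_eq_Ico]
    congr 1
    · refine Finset.sum_congr rfl fun j hj => ?_
      have hj' := Finset.mem_range.mp hj
      rw [show (j-k)+(k-j) = k - j by omega]
    · refine Finset.sum_congr rfl fun j hj => ?_
      have hj' := Finset.mem_Ico.mp hj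
      rw [show (j-k)+(k-j) = j - k by omega]
  have hPswap : ∑ k ∈ Finset.range (n+1), ∑ j ∈ Finset.Ico (k+1) (n+1), b (j-k) * ⟪w j, w k⟫
      = ∑ j ∈ Finset.range (n+1), ∑ k ∈ Finset.range j, b (j-k) * ⟪w j, w k⟫ := by
    apply Finset.sum_comm'
    intro k j
    simp only [Finset.mem_range, Finset.mem_Ico]
    omega
  have hSdiag : S = ∑ k ∈ Finset.range (n+1), ∑ j ∈ Finset.range k, b (k-j) * ⟪w j, w k⟫ + D := by
    rw [hS, hD, ← Finset.sum_add_distrib]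
    refine Finset.sum_congr rfl fun k _ => ?_
    rw [Finset.sum_range_succ, Nat.sub_self, hb0, one_mul, real_inner_self_eq_norm_sq]
  have hP : ∑ k ∈ Finset.range (n+1), ∑ j ∈ Finset.Ico (k+1) (n+1), b (j-k) * ⟪w j, w k⟫
      = S - D := by
    rw [hPswap, hSdiag]
    have : ∑ j ∈ Finset.range (n+1), ∑ k ∈ Finset.range j, b (j-k) * ⟪w j, w k⟫
        = ∑ k ∈ Finset.range (n+1), ∑ j ∈ Finset.range k, b (k-j) * ⟪w j, w k⟫ := by
      refine Finset.sum_congr rfl fun k _ => Finset.sum_congr rfl fun j _ => ?_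
      rw [real_inner_comm]
    rw [this]
    ring
  have hQ2S : Q = 2 * S - D := by rw [hQsplit, hP]; ring
  -- Part B : Q ≥ 0
  have hTnn : ∀ m, 0 ≤ T m := by
    intro m
    have e : T m = ∑ j ∈ Finset.range (n+1), ∑ k ∈ Finset.range (n+1),
        ((m - (j-k) - (k-j) : ℕ) : ℝ) * ⟪w j, w k⟫ := by
      rw [hT]
      exact Finset.sum_comm (s := Finset.range (n+1)) (t := Finset.range (n+1))
        (f := fun k j => ((m - (j-k) - (k-j) : ℕ) : ℝ) * ⟪w j, w k⟫)
    rw [e]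
    exact fejer_nonneg m (n+1) w
  have hS0nn : 0 ≤ S0 := by
    rw [hS0]
    have : S0 = ⟪∑ j ∈ Finset.range (n+1), w j, ∑ j ∈ Finset.range (n+1), w j⟫ := by
      rw [hS0, sum_inner]
      refine Finset.sum_congr rfl fun k _ => ?_
      rw [inner_sum]
      refine Finset.sum_congr rfl fun j _ => real_inner_comm _ _
    rw [← hS0, this]
    exact real_inner_self_nonneg
  have hQdecomp : Q = b n * S0 + (b n - b (n+1)) * T n
      + ∑ l ∈ Finset.range n, (b l - 2 * b (l+1) + b (l+2)) * T (l+1) := by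
    have e3 : ∑ l ∈ Finset.range n, (b l - 2 * b (l+1) + b (l+2)) * T (l+1)
        = ∑ k ∈ Finset.range (n+1), ∑ j ∈ Finset.range (n+1), ∑ l ∈ Finset.range n,
            (b l - 2 * b (l+1) + b (l+2)) * ((((l+1) - (j-k) - (k-j) : ℕ):ℝ) * ⟪w j, w k⟫) := by
      simp only [hT, Finset.mul_sum]
      rw [Finset.sum_comm (s := Finset.range n) (t := Finset.range (n+1))]
      refine Finset.sum_congr rfl fun k _ => ?_
      exact Finset.sum_comm (s := Finset.range n) (t := Finset.range (n+1)) (f := fun l j =>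
        (b l - 2 * b (l+1) + b (l+2)) * ((((l+1) - (j-k) - (k-j) : ℕ):ℝ) * ⟪w j, w k⟫))
    rw [e3, hQ, hS0, hT]
    simp only [Finset.mul_sum]
    rw [← Finset.sum_add_distrib, ← Finset.sum_add_distrib]
    refine Finset.sum_congr rfl fun k hk => ?_
    rw [← Finset.sum_add_distrib, ← Finset.sum_add_distrib]
    refine Finset.sum_congr rfl fun j hj => ?_
    have hk' := Finset.mem_range.mp hk
    have hj' := Finset.mem_range.mp hj
    have hd : (j-k)+(k-j) ≤ n := by omega
    rw [coeff_decomp b ((j-k)+(k-j)) n hd,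
      show n - ((j-k)+(k-j)) = n - (j-k) - (k-j) by omega,
      add_mul, add_mul, Finset.sum_mul, mul_assoc]
    congr 1
    refine Finset.sum_congr rfl fun l _ => ?_
    rw [show l + 1 - ((j-k)+(k-j)) = l + 1 - (j-k) - (k-j) by omega, mul_assoc]
  have hQnn : 0 ≤ Q := by
    rw [hQdecomp]
    have h1 : 0 ≤ b n * S0 := mul_nonneg (hbnn n) hS0nn
    have h2 : 0 ≤ (b n - b (n+1)) * T n := mul_nonneg (by linarith [hbmono n]) (hTnn n)
    have h3 : 0 ≤ ∑ l ∈ Finset.range n, (b l - 2 * b (l+1) + b (l+2)) * T (l+1) :=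
      Finset.sum_nonneg fun l _ => mul_nonneg (hbconv l) (hTnn (l+1))
    linarith
  linarith [hQ2S, hQnn]
end

section
/- Let H be a real inner product space, a a symmetric positive semidefinite bilinear form on H. For u^{k+1} = u₁^{k+1} + u₂^{k+1} and u^k = u₁^k + u₂^k in H, one has a(u₁^{k+1} + u₂^k, u^{k+1} - u^k) ≥ (1/2)(a(u^{k+1}, u^{k+1}) - a(u^k, u^k) - a(u₂^{k+1} - u₂^k, u₂^{k+1} - u₂^k)). -/
/-- Key energy inequality for the partially explicit splitting scheme:
`a(u₁^{k+1} + u₂^k, u^{k+1} - u^k)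
  ≥ (1/2)(a(u^{k+1},u^{k+1}) - a(u^k,u^k) - a(u₂^{k+1}-u₂^k, u₂^{k+1}-u₂^k))`. -/
theorem stmt10 {H : Type*} [NormedAddCommGroup H] [InnerProductSpace ℝ H]
    (a : H →ₗ[ℝ] H →ₗ[ℝ] ℝ)
    (hsymm : ∀ u v : H, a u v = a v u)
    (hpos : ∀ w : H, 0 ≤ a w w)
    (u₁k1 u₂k1 u₁k u₂k : H) :
    (1 / 2) * (a (u₁k1 + u₂k1) (u₁k1 + u₂k1) - a (u₁k + u₂k) (u₁k + u₂k)
        - a (u₂k1 - u₂k) (u₂k1 - u₂k))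
      ≤ a (u₁k1 + u₂k) ((u₁k1 + u₂k1) - (u₁k + u₂k)) := by
  have h := hpos ((u₁k1 + u₂k1) - (u₁k + u₂k) - (u₂k1 - u₂k))
  simp only [map_sub, map_add, LinearMap.sub_apply, LinearMap.add_apply] at *
  have h1 := hsymm u₁k1 u₂k1
  have h2 := hsymm u₁k u₂k
  have h3 := hsymm u₁k1 u₁k
  have h4 := hsymm u₁k1 u₂k
  have h5 := hsymm u₂k1 u₁k
  have h6 := hsymm u₂k1 u₂k
  have h7 := hsymm u₁k u₂k
  have h8 := hsymm u₁k u₂k1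
  linarith
end
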